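/- arXiv:math/0601711 — 4 statements merged into one kernel-verified Lean document; each statement's English description precedes it below -/
import Mathlib

section
/- For every positive concave function ω : (0,∞) → (0,∞) there exists a concave strictly increasing function ω̃ : (0,∞) → (0,∞) such that ω ≤ ω̃ ≤ 2ω. -/
/-- For every positive concave function `ω : (0,∞) → (0,∞)` there exists
a concave strictly increasing function `ω̃ : (0,∞) → (0,∞)` with `ω ≤ ω̃ ≤ 2ω` on `(0,∞)`. -/
theorem exists_strictMono_concave_majorant (ω : ℝ → ℝ)
    (hpos : ∀ t, 0 < t → 0 < ω t)
    (hconc : ConcaveOn ℝ (Set.Ioi 0) ω) :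
    ∃ ωt : ℝ → ℝ, ConcaveOn ℝ (Set.Ioi 0) ωt ∧ StrictMonoOn ωt (Set.Ioi 0) ∧
      (∀ t, 0 < t → 0 < ωt t) ∧
      (∀ t, 0 < t → ω t ≤ ωt t ∧ ωt t ≤ 2 * ω t) := by
  have hω1 : 0 < ω 1 := hpos 1 one_pos
  -- ω is monotone on (0, ∞)
  have hmono : MonotoneOn ω (Set.Ioi 0) := by
    intro a ha b hb hab
    rcases eq_or_lt_of_le hab with rfl | hab
    · exact le_refl _
    by_contra hlt
    push_neg at hlt
    rw [Set.mem_Ioi] at ha hb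
    have hd0 : 0 < ω a - ω b := by linarith
    set t := max (b + 1) ((b * ω a - a * ω b) / (ω a - ω b) + 1) with ht
    have htb : b < t := lt_of_lt_of_le (by linarith) (le_max_left _ _)
    have hta : a < t := lt_trans hab htb
    have ht0 : 0 < t := lt_trans hb htb
    have h1 : (b * ω a - a * ω b) / (ω a - ω b) < t :=
      lt_of_lt_of_le (by linarith) (le_max_right _ _)
    have htd : b * ω a - a * ω b < t * (ω a - ω b) := (div_lt_iff₀ hd0).mp h1
    have hta' : 0 < t - a := by linarith
    have hcomb : ((t - b) / (t - a)) • a + ((b - a) / (t - a)) • t = b := by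
      simp only [smul_eq_mul]
      rw [div_mul_eq_mul_div, div_mul_eq_mul_div, ← add_div, div_eq_iff (ne_of_gt hta')]
      ring
    have key := hconc.2 (Set.mem_Ioi.mpr ha) (Set.mem_Ioi.mpr ht0)
      (div_nonneg (by linarith : (0:ℝ) ≤ t - b) (by linarith : (0:ℝ) ≤ t - a))
      (div_nonneg (by linarith : (0:ℝ) ≤ b - a) (by linarith : (0:ℝ) ≤ t - a))
      (by rw [← add_div, show t - b + (b - a) = t - a by ring,
            div_self (ne_of_gt hta')])
    rw [hcomb] at key
    simp only [smul_eq_mul] at key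
    have e : (t - b) / (t - a) * ω a + (b - a) / (t - a) * ω t
        = ((t - b) * ω a + (b - a) * ω t) / (t - a) := by ring
    rw [e] at key
    have key2 : (t - b) * ω a + (b - a) * ω t ≤ ω b * (t - a) :=
      (div_le_iff₀ hta').mp key
    nlinarith [key2, htd, mul_pos (sub_pos.mpr hab) (hpos t ht0)]
  -- concavity of g(t) = t/(t+1)
  have hgconc : ConcaveOn ℝ (Set.Ioi 0) (fun t : ℝ => t / (t + 1)) := by
    refine ⟨convex_Ioi 0, ?_⟩
    intro x hx y hy a b ha hb hab
    rw [Set.mem_Ioi] at hx hy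
    simp only [smul_eq_mul]
    have hx1 : (0:ℝ) < x + 1 := by linarith
    have hy1 : (0:ℝ) < y + 1 := by linarith
    have hz : (0:ℝ) < a * x + b * y + 1 := by nlinarith
    have keyeq : a * (x / (x + 1)) + b * (y / (y + 1))
        = (a * x * (y + 1) + b * y * (x + 1)) / ((x + 1) * (y + 1)) := by
      field_simp
    rw [keyeq, div_le_div_iff₀ (by positivity) hz]
    have hb' : b = 1 - a := by linarith
    subst hb'
    nlinarith [mul_nonneg (mul_nonneg ha hb) (sq_nonneg (x - y))]
  -- key lower bound: ω 1 * (t/(t+1)) ≤ ω t for t > 0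
  have hlow : ∀ t : ℝ, 0 < t → ω 1 * (t / (t + 1)) ≤ ω t := by
    intro t ht
    rcases le_or_gt 1 t with h1t | ht1
    · have h1 : ω 1 ≤ ω t := hmono (Set.mem_Ioi.mpr one_pos) (Set.mem_Ioi.mpr ht) h1t
      have h2 : t / (t + 1) ≤ 1 := by
        rw [div_le_one (by linarith)]; linarith
      nlinarith
    · -- use concavity at t² and 1 with weights 1/(1+t), t/(1+t)
      have ht2 : (0:ℝ) < t ^ 2 := by positivity
      have h1t : (0:ℝ) < 1 + t := by linarith
      have hcomb : (1 / (1 + t)) • (t ^ 2) + (t / (1 + t)) • (1:ℝ) = t := by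
        simp only [smul_eq_mul]
        rw [div_mul_eq_mul_div, div_mul_eq_mul_div, ← add_div, div_eq_iff (ne_of_gt h1t)]
        ring
      have key := hconc.2 (Set.mem_Ioi.mpr ht2) (Set.mem_Ioi.mpr one_pos)
        (by positivity : (0:ℝ) ≤ 1 / (1 + t))
        (by positivity : (0:ℝ) ≤ t / (1 + t))
        (by field_simp)
      rw [hcomb] at key
      simp only [smul_eq_mul] at key
      have hpt2 : 0 < ω (t ^ 2) := hpos _ ht2
      have h3 : t / (t + 1) * ω 1 ≤ ω t := by
        have e : t / (t + 1) = t / (1 + t) := by ring_nf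
        rw [e]
        nlinarith [mul_pos (by positivity : (0:ℝ) < 1 / (1 + t)) hpt2]
      linarith [h3, (by ring : ω 1 * (t / (t + 1)) = t / (t + 1) * ω 1)]
  -- the function
  refine ⟨fun t => ω t + ω 1 * (t / (t + 1)), ?_, ?_, ?_, ?_⟩
  · have hs : ConcaveOn ℝ (Set.Ioi 0) (fun t : ℝ => ω 1 * (t / (t + 1))) := by
      have := hgconc.smul (le_of_lt hω1)
      simpa [smul_eq_mul] using this
    exact hconc.add hs
  · intro x hx y hy hxy
    rw [Set.mem_Ioi] at hx hy
    have h1 : ω x ≤ ω y := hmono (Set.mem_Ioi.mpr hx) (Set.mem_Ioi.mpr hy) (le_of_lt hxy)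
    have h2 : x / (x + 1) < y / (y + 1) := by
      rw [div_lt_div_iff₀ (by linarith) (by linarith)]
      nlinarith
    have h3 : ω 1 * (x / (x + 1)) < ω 1 * (y / (y + 1)) :=
      (mul_lt_mul_iff_right₀ hω1).mpr h2
    dsimp only
    linarith
  · intro t ht
    have := hpos t ht
    have hg : 0 < t / (t + 1) := by positivity
    dsimp only
    nlinarith
  · intro t ht
    have h1 := hlow t ht
    have hg : 0 < t / (t + 1) := by positivity
    constructor
    · nlinarith
    · dsimp only; linarith
end

section
/- Let ω : ℝ≥0 → ℝ≥0 be continuous, strictly increasing, concave, with ω(0) = 0, and let m ≥ 1 be an integer. Let ψ denote the inverse function of s ↦ s^m ω(s) (defined on the range of that function), and define φ := ω ∘ ψ. Then φ is concave on its domain. -/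
/-!
Write `g s = s ^ m * ω s`, so that `φ = ω ∘ g⁻¹`. Given `s, r ≥ 0` and weights `a + b = 1`, pick
`v` between `s` and `r` with `ω v = a ω s + b ω r`; concavity of `ω` gives `v ≤ a s + b r`. Then
`g v ≤ (a s + b r) ^ m (a ω s + b ω r) ≤ (a s ^ m + b r ^ m)(a ω s + b ω r) ≤ a g s + b g r`,
by convexity of `t ↦ t ^ m` and Chebyshev's inequality for the similarly ordered pairs
`(s ^ m, r ^ m)` and `(ω s, ω r)`. Hence `v ≤ g⁻¹ (a g s + b g r)`, and applying `ω` gives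
concavity of `φ`.
-/

open Set

lemma convexCombo_mul_convexCombo_le {R : Type*} [CommRing R] [LinearOrder R]
    [IsStrictOrderedRing R] {a b x₁ x₂ y₁ y₂ : R} (ha : 0 ≤ a) (hb : 0 ≤ b) (hab : a + b = 1)
    (h : 0 ≤ (x₂ - x₁) * (y₂ - y₁)) :
    (a * x₁ + b * x₂) * (a * y₁ + b * y₂) ≤ a * (x₁ * y₁) + b * (x₂ * y₂) := by
  obtain rfl : b = 1 - a := eq_sub_of_add_eq' hab
  nlinarith [mul_nonneg (mul_nonneg ha hb) h]

lemma StrictMonoOn.exists_le_convexCombo_of_concaveOn {D : Set ℝ} {f : ℝ → ℝ}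
    (hcont : ContinuousOn f D) (hmono : StrictMonoOn f D) (hconc : ConcaveOn ℝ D f)
    {x y a b : ℝ} (hx : x ∈ D) (hy : y ∈ D) (ha : 0 ≤ a) (hb : 0 ≤ b) (hab : a + b = 1) :
    ∃ v ∈ D, v ≤ a * x + b * y ∧ f v = a * f x + b * f y := by
  have hxy : uIcc x y ⊆ D := hconc.1.ordConnected.uIcc_subset hx hy
  have hval : a * f x + b * f y ∈ uIcc (f x) (f y) :=
    convex_uIcc (f x) (f y) left_mem_uIcc right_mem_uIcc ha hb hab
  obtain ⟨v, hv, hfv⟩ := intermediate_value_uIcc (hcont.mono hxy) hval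
  have hcomb : a * x + b * y ∈ D := hconc.1 hx hy ha hb hab
  refine ⟨v, hxy hv, (hmono.le_iff_le (hxy hv) hcomb).1 ?_, hfv⟩
  rw [hfv]
  simpa only [smul_eq_mul] using hconc.2 hx hy ha hb hab

lemma strictMonoOn_pow_mul {ω : ℝ → ℝ} (m : ℕ) (hnn : ∀ t, 0 ≤ t → 0 ≤ ω t)
    (hmono : StrictMonoOn ω (Ici 0)) : StrictMonoOn (fun s => s ^ m * ω s) (Ici 0) := by
  intro x (hx : 0 ≤ x) y hy hxy
  calc x ^ m * ω x ≤ y ^ m * ω x := by gcongr; exact hnn x hx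
    _ < y ^ m * ω y := by
      gcongr
      · exact pow_pos (hx.trans_lt hxy) m
      · exact hmono (mem_Ici.2 hx) hy hxy

lemma pow_mul_le_convexCombo {ω : ℝ → ℝ} (m : ℕ) (hnn : ∀ t, 0 ≤ t → 0 ≤ ω t)
    (hmono : MonotoneOn ω (Ici 0)) {s r v a b : ℝ} (hs : 0 ≤ s) (hr : 0 ≤ r) (hv : 0 ≤ v)
    (ha : 0 ≤ a) (hb : 0 ≤ b) (hab : a + b = 1) (hvle : v ≤ a * s + b * r)
    (hωv : ω v = a * ω s + b * ω r) :
    v ^ m * ω v ≤ a * (s ^ m * ω s) + b * (r ^ m * ω r) := by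
  have hpow : (a * s + b * r) ^ m ≤ a * s ^ m + b * r ^ m := by
    simpa only [smul_eq_mul] using (convexOn_pow m).2 (mem_Ici.2 hs) (mem_Ici.2 hr) ha hb hab
  have hsimilar : 0 ≤ (r ^ m - s ^ m) * (ω r - ω s) := by
    rcases le_total s r with hsr | hrs
    · exact mul_nonneg (sub_nonneg.2 (pow_le_pow_left₀ hs hsr m))
        (sub_nonneg.2 (hmono (mem_Ici.2 hs) (mem_Ici.2 hr) hsr))
    · exact mul_nonneg_of_nonpos_of_nonpos (sub_nonpos.2 (pow_le_pow_left₀ hr hrs m))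
        (sub_nonpos.2 (hmono (mem_Ici.2 hr) (mem_Ici.2 hs) hrs))
  calc v ^ m * ω v ≤ (a * s + b * r) ^ m * ω v := by gcongr; exact hnn v hv
    _ ≤ (a * s ^ m + b * r ^ m) * (a * ω s + b * ω r) := by
      rw [hωv]; gcongr
      exact add_nonneg (mul_nonneg ha (hnn s hs)) (mul_nonneg hb (hnn r hr))
    _ ≤ a * (s ^ m * ω s) + b * (r ^ m * ω r) := convexCombo_mul_convexCombo_le ha hb hab hsimilar

theorem phi_concave_general (ω : ℝ → ℝ) (m : ℕ)
    (hnn : ∀ t, 0 ≤ t → 0 ≤ ω t)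
    (hcont : ContinuousOn ω (Set.Ici 0))
    (hmono : StrictMonoOn ω (Set.Ici 0))
    (hconc : ConcaveOn ℝ (Set.Ici 0) ω)
    (ψ : ℝ → ℝ)
    (hψ : ∀ s : ℝ, 0 ≤ s → ψ (s ^ m * ω s) = s) :
    ConcaveOn ℝ ((fun s : ℝ => s ^ m * ω s) '' Set.Ici 0) (fun t => ω (ψ t)) := by
  set g : ℝ → ℝ := fun s => s ^ m * ω s
  have hg : StrictMonoOn g (Ici 0) := strictMonoOn_pow_mul m hnn hmono
  have hconv : Convex ℝ (g '' Ici 0) :=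
    (isPreconnected_Ici.image g ((continuous_pow m).continuousOn.mul hcont)).ordConnected.convex
  refine ⟨hconv, ?_⟩
  rintro _ ⟨s, hs, rfl⟩ _ ⟨r, hr, rfl⟩ a b ha hb hab
  obtain ⟨u, hu, hgu⟩ := hconv (mem_image_of_mem g hs) (mem_image_of_mem g hr) ha hb hab
  obtain ⟨v, hv, hvle, hωv⟩ := hmono.exists_le_convexCombo_of_concaveOn hcont hconc hs hr ha hb hab
  have hvu : v ≤ u := (hg.le_iff_le hv hu).1 <| by
    rw [hgu]
    exact pow_mul_le_convexCombo m hnn hmono.monotoneOn hs hr hv ha hb hab hvle hωv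
  have hψg : ∀ t ∈ Ici (0 : ℝ), ψ (g t) = t := hψ
  simp only [smul_eq_mul] at hgu ⊢
  rw [← hgu, hψg s hs, hψg r hr, hψg u hu, ← hωv]
  exact hmono.monotoneOn hv hu hvu

/-- Let `ω : [0,∞) → [0,∞)` be continuous, strictly increasing, concave,
`ω 0 = 0`, `m ≥ 1`. If `ψ` is the inverse of `s ↦ s^m * ω s` (on the range of that
function), then `φ := ω ∘ ψ` is concave on its domain, i.e. on the range. -/
theorem phi_concave (ω : ℝ → ℝ) (m : ℕ) (hm : 1 ≤ m)
    (hnn : ∀ t, 0 ≤ t → 0 ≤ ω t)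
    (hcont : ContinuousOn ω (Set.Ici 0))
    (hmono : StrictMonoOn ω (Set.Ici 0))
    (hconc : ConcaveOn ℝ (Set.Ici 0) ω)
    (h0 : ω 0 = 0)
    (ψ : ℝ → ℝ)
    (hψ : ∀ s : ℝ, 0 ≤ s → ψ (s ^ m * ω s) = s) :
    ConcaveOn ℝ ((fun s : ℝ => s ^ m * ω s) '' Set.Ici 0) (fun t => ω (ψ t)) :=
  phi_concave_general ω m hnn hcont hmono hconc ψ hψ
end

section
/- Let P, P' and P₀, …, P_m be polynomials on ℝⁿ of degree ≤ k with P₀ = P, P_m = P', and let x, x₀, …, x_m ∈ ℝⁿ with x₀ = x. Then for every multi-index α with |α| ≤ k, |D^α(P − P')(x)| ≤ eⁿ · max_{|β| ≤ k−|α|} Σ_{i=0}^{m−1} |D^{α+β}(P_i − P_{i+1})(x_i)| · ‖x − x_i‖^{|β|}. -/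
open MvPolynomial

/-- Iterated partial derivative `D^α` of a multivariate polynomial. -/
noncomputable def mderiv {n : ℕ} (α : Fin n → ℕ) (P : MvPolynomial (Fin n) ℝ) :
    MvPolynomial (Fin n) ℝ :=
  (List.finRange n).foldl (fun Q i => (MvPolynomial.pderiv i)^[α i] Q) P

/-- The finite set of multi-indices `β ∈ ℕⁿ` with `|β| ≤ m`. -/
def multiIndices (n m : ℕ) : Finset (Fin n → ℕ) :=
  (Fintype.piFinset fun _ : Fin n => Finset.range (m + 1)).filter fun β => (∑ i, β i) ≤ m

lemma multiIndices_nonempty (n m : ℕ) : (multiIndices n m).Nonempty :=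
  ⟨fun _ => 0, by simp [multiIndices]⟩


namespace ChainAux

variable {n : ℕ}

lemma iterate_pderiv_add (i : Fin n) (b : ℕ) (P Q : MvPolynomial (Fin n) ℝ) :
    (pderiv i)^[b] (P + Q) = (pderiv i)^[b] P + (pderiv i)^[b] Q := by
  induction b generalizing P Q with
  | zero => simp
  | succ b ih => simp only [Function.iterate_succ_apply, map_add, ih]

lemma iterate_pderiv_zero (i : Fin n) (b : ℕ) :
    (pderiv i)^[b] (0 : MvPolynomial (Fin n) ℝ) = 0 := by
  induction b with
  | zero => simp
  | succ b ih => simp only [Function.iterate_succ_apply, map_zero, ih]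

lemma mderiv_add (α : Fin n → ℕ) (P Q : MvPolynomial (Fin n) ℝ) :
    mderiv α (P + Q) = mderiv α P + mderiv α Q := by
  unfold mderiv
  generalize List.finRange n = l
  induction l generalizing P Q with
  | nil => simp
  | cons i t ih => simp only [List.foldl_cons]; rw [iterate_pderiv_add]; exact ih _ _

lemma mderiv_zero (α : Fin n → ℕ) : mderiv α (0 : MvPolynomial (Fin n) ℝ) = 0 := by
  unfold mderiv
  generalize List.finRange n = l
  induction l with
  | nil => simp
  | cons i t ih => simp only [List.foldl_cons]; rw [iterate_pderiv_zero]; exact ih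

noncomputable def mderivHom (α : Fin n → ℕ) :
    MvPolynomial (Fin n) ℝ →+ MvPolynomial (Fin n) ℝ where
  toFun := mderiv α
  map_zero' := mderiv_zero α
  map_add' := mderiv_add α

lemma mderiv_sum {ι : Type*} (α : Fin n → ℕ) (s : Finset ι) (f : ι → MvPolynomial (Fin n) ℝ) :
    mderiv α (∑ i ∈ s, f i) = ∑ i ∈ s, mderiv α (f i) :=
  map_sum (mderivHom α) f s

lemma iterate_pderiv_monomial (i : Fin n) (b : ℕ) (s : Fin n →₀ ℕ) (a : ℝ) :
    (pderiv i)^[b] (monomial s a) =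
      monomial (s - Finsupp.single i b) (a * (s i).descFactorial b) := by
  induction b with
  | zero => simp
  | succ b ih =>
    rw [Function.iterate_succ_apply', ih, pderiv_monomial]
    have he : s - Finsupp.single i b - Finsupp.single i 1 = s - Finsupp.single i (b + 1) := by
      rw [tsub_tsub, ← Finsupp.single_add]
    have hc : (s - Finsupp.single i b) i = s i - b := by
      rw [Finsupp.tsub_apply, Finsupp.single_eq_same]
    rw [he, hc]
    congr 1
    rw [Nat.descFactorial_succ]
    push_cast
    ring

lemma foldl_pderiv_monomial (β : Fin n → ℕ) (l : List (Fin n)) (hl : l.Nodup)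
    (s : Fin n →₀ ℕ) (a : ℝ) :
    l.foldl (fun Q i => (pderiv i)^[β i] Q) (monomial s a) =
      monomial (s - ∑ i ∈ l.toFinset, Finsupp.single i (β i))
        (a * ∏ i ∈ l.toFinset, ((s i).descFactorial (β i) : ℝ)) := by
  induction l generalizing s a with
  | nil => simp
  | cons i t ih =>
    have hi : i ∉ t := (List.nodup_cons.mp hl).1
    have hi' : i ∉ t.toFinset := by simpa using hi
    have ht : t.Nodup := (List.nodup_cons.mp hl).2
    rw [List.foldl_cons, iterate_pderiv_monomial, ih ht]
    have hexp : s - Finsupp.single i (β i) - ∑ j ∈ t.toFinset, Finsupp.single j (β j)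
        = s - ∑ j ∈ (i :: t).toFinset, Finsupp.single j (β j) := by
      rw [tsub_tsub]
      congr 1
      rw [List.toFinset_cons, Finset.sum_insert hi']
    have hco : ∀ j ∈ t.toFinset, (((s - Finsupp.single i (β i)) j).descFactorial (β j) : ℝ)
        = ((s j).descFactorial (β j) : ℝ) := by
      intro j hj
      have hji : j ≠ i := by rintro rfl; exact hi' hj
      rw [Finsupp.tsub_apply, Finsupp.single_eq_of_ne' (Ne.symm hji), Nat.sub_zero]
    rw [hexp, Finset.prod_congr rfl hco, List.toFinset_cons, Finset.prod_insert hi']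
    ring_nf

lemma mderiv_monomial (β : Fin n → ℕ) (s : Fin n →₀ ℕ) (a : ℝ) :
    mderiv β (monomial s a) =
      monomial (s - ∑ i, Finsupp.single i (β i))
        (a * ∏ i, ((s i).descFactorial (β i) : ℝ)) := by
  unfold mderiv
  rw [foldl_pderiv_monomial β _ (List.nodup_finRange n), List.toFinset_finRange]
lemma sum_single_apply (β : Fin n → ℕ) (j : Fin n) :
    (∑ i, Finsupp.single i (β i)) j = β j := by
  rw [Finset.sum_apply']
  simp [Finsupp.single_apply]

lemma descFactorial_add' (s a b : ℕ) :
    s.descFactorial (a + b) = s.descFactorial a * (s - a).descFactorial b := by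
  induction b with
  | zero => simp
  | succ b ih =>
    rw [← Nat.add_assoc, Nat.descFactorial_succ, ih, Nat.descFactorial_succ, Nat.sub_sub]
    ring

lemma sum_single_add (α β : Fin n → ℕ) :
    (∑ i, Finsupp.single i ((α + β) i)) =
      (∑ i, Finsupp.single i (α i)) + ∑ i, Finsupp.single i (β i) := by
  rw [← Finset.sum_add_distrib]
  exact Finset.sum_congr rfl fun i _ => by rw [Pi.add_apply, Finsupp.single_add]

lemma mderiv_mderiv (α β : Fin n → ℕ) (Q : MvPolynomial (Fin n) ℝ) :
    mderiv β (mderiv α Q) = mderiv (α + β) Q := by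
  induction Q using MvPolynomial.induction_on' with
  | add p q hp hq => rw [mderiv_add, mderiv_add, mderiv_add, hp, hq]
  | monomial s a =>
    rw [mderiv_monomial, mderiv_monomial, mderiv_monomial]
    have hexp : s - ∑ i, Finsupp.single i (α i) - ∑ i, Finsupp.single i (β i)
        = s - ∑ i, Finsupp.single i ((α + β) i) := by
      rw [tsub_tsub, sum_single_add]
    rw [hexp]
    congr 1
    rw [mul_assoc, ← Finset.prod_mul_distrib]
    congr 1
    refine Finset.prod_congr rfl fun i _ => ?_
    rw [Finsupp.tsub_apply, sum_single_apply, Pi.add_apply, descFactorial_add']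
    push_cast
    ring
lemma finsupp_sum_eq (s : Fin n →₀ ℕ) : s.sum (fun _ e => e) = ∑ j, s j :=
  Finsupp.sum_fintype _ _ fun _ => rfl

lemma finsupp_sum_eq' (s : Fin n →₀ ℕ) : (s.sum fun _ => id) = ∑ j, s j :=
  Finsupp.sum_fintype _ _ fun _ => rfl

lemma totalDegree_mderiv_le (α : Fin n → ℕ) (Q : MvPolynomial (Fin n) ℝ) {k : ℕ}
    (hQ : Q.totalDegree ≤ k) :
    (mderiv α Q).totalDegree ≤ k - ∑ i, α i := by
  conv_lhs => rw [Q.as_sum, mderiv_sum]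
  refine (totalDegree_finset_sum _ _).trans (Finset.sup_le fun s hs => ?_)
  rw [mderiv_monomial]
  by_cases h : ∀ j, α j ≤ s j
  · refine (totalDegree_monomial_le _ _).trans ?_
    rw [finsupp_sum_eq']
    have : ∀ j, (s - ∑ i, Finsupp.single i (α i)) j = s j - α j := fun j => by
      rw [Finsupp.tsub_apply, sum_single_apply]
    simp_rw [this]
    rw [Finset.sum_tsub_distrib Finset.univ fun i _ => h i]
    refine Nat.sub_le_sub_right ?_ _
    calc ∑ j, s j = s.sum (fun _ e => e) := (finsupp_sum_eq s).symm
      _ ≤ Q.totalDegree := le_totalDegree hs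
      _ ≤ k := hQ
  · push_neg at h
    obtain ⟨j, hj⟩ := h
    have : ((s j).descFactorial (α j) : ℝ) = 0 := by
      rw [Nat.cast_eq_zero, Nat.descFactorial_eq_zero_iff_lt]; exact hj
    rw [Finset.prod_eq_zero (Finset.mem_univ j) this, mul_zero, map_zero]
    simp
lemma eval_monomial' (s : Fin n →₀ ℕ) (a : ℝ) (f : Fin n → ℝ) :
    eval f (monomial s a) = a * ∏ j, f j ^ s j := by
  rw [eval_monomial, Finsupp.prod_fintype]
  intro i; exact pow_zero _

lemma mem_multiIndices {d : ℕ} {β : Fin n → ℕ} :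
    β ∈ multiIndices n d ↔ (∀ j, β j ≤ d) ∧ (∑ j, β j) ≤ d := by
  simp [multiIndices, Nat.lt_succ_iff]

lemma taylor_monomial (d : ℕ) (s : Fin n →₀ ℕ) (hs : (∑ j, s j) ≤ d) (a : ℝ)
    (c y : Fin n → ℝ) :
    eval y (monomial s a) = ∑ β ∈ multiIndices n d,
      eval c (mderiv β (monomial s a)) * (∏ j, (y j - c j) ^ β j) /
        (∏ j, ((β j).factorial : ℝ)) := by
  rw [eval_monomial']
  have hy : ∀ j, y j = (y j - c j) + c j := fun j => (sub_add_cancel _ _).symm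
  set g : Fin n → ℕ → ℝ :=
    fun j b => (y j - c j) ^ b * c j ^ (s j - b) * ((s j).choose b : ℝ) with hg
  have key : (∏ j, y j ^ s j) =
      ∑ β ∈ Fintype.piFinset (fun j => Finset.range (s j + 1)), ∏ j, g j (β j) := by
    rw [← Finset.prod_univ_sum]
    refine Finset.prod_congr rfl fun j _ => ?_
    conv_lhs => rw [hy j]
    rw [add_pow]
  have hsub : Fintype.piFinset (fun j => Finset.range (s j + 1)) ⊆ multiIndices n d := by
    intro β hβ
    rw [Fintype.mem_piFinset] at hβ
    have hle : ∀ j, β j ≤ s j := fun j => Nat.lt_succ_iff.mp (by simpa using hβ j)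
    rw [mem_multiIndices]
    constructor
    · intro j
      exact (hle j).trans ((Finset.single_le_sum (fun _ _ => Nat.zero_le _)
        (Finset.mem_univ j)).trans hs)
    · exact (Finset.sum_le_sum fun j _ => hle j).trans hs
  rw [key, Finset.sum_subset hsub (fun β hβ hβ' => ?_)]
  · rw [Finset.mul_sum]
    refine Finset.sum_congr rfl fun β hβ => ?_
    rw [mderiv_monomial, eval_monomial']
    have h1 : ∀ j, (s - ∑ i, Finsupp.single i (β i)) j = s j - β j := fun j => by
      rw [Finsupp.tsub_apply, sum_single_apply]
    simp_rw [h1]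
    have h2 : ∀ j : Fin n, ((s j).descFactorial (β j) : ℝ)
        = ((β j).factorial : ℝ) * ((s j).choose (β j) : ℝ) := fun j => by
      rw [← Nat.cast_mul, Nat.descFactorial_eq_factorial_mul_choose]
    simp_rw [h2]
    rw [Finset.prod_mul_distrib, Finset.prod_mul_distrib, Finset.prod_mul_distrib]
    have hf : (∏ j, ((β j).factorial : ℝ)) ≠ 0 := by positivity
    field_simp
  · rw [Fintype.mem_piFinset] at hβ'
    push_neg at hβ'
    obtain ⟨j, hj⟩ := hβ'
    have : s j < β j := by simpa [Nat.lt_succ_iff, Nat.not_le] using hj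
    refine Finset.prod_eq_zero (Finset.mem_univ j) ?_
    simp only [hg]
    rw [Nat.choose_eq_zero_of_lt this]
    simp

lemma taylor_eval (d : ℕ) (Q : MvPolynomial (Fin n) ℝ) (hQ : Q.totalDegree ≤ d)
    (c y : Fin n → ℝ) :
    eval y Q = ∑ β ∈ multiIndices n d,
      eval c (mderiv β Q) * (∏ j, (y j - c j) ^ β j) / (∏ j, ((β j).factorial : ℝ)) := by
  conv_lhs => rw [Q.as_sum]
  rw [map_sum]
  rw [Finset.sum_congr rfl fun s hs => taylor_monomial d s
    (by rw [← finsupp_sum_eq]; exact (le_totalDegree hs).trans hQ) (coeff s Q) c y]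
  rw [Finset.sum_comm]
  refine Finset.sum_congr rfl fun β _ => ?_
  conv_rhs => rw [Q.as_sum, mderiv_sum, map_sum, Finset.sum_mul, Finset.sum_div]
lemma abs_coord_le (v : EuclideanSpace ℝ (Fin n)) (j : Fin n) : |v j| ≤ ‖v‖ := by
  rw [EuclideanSpace.norm_eq]
  calc |v j| = Real.sqrt (‖v j‖ ^ 2) := by
        rw [Real.sqrt_sq (norm_nonneg _), Real.norm_eq_abs]
    _ ≤ Real.sqrt (∑ i, ‖v i‖ ^ 2) :=
        Real.sqrt_le_sqrt (Finset.single_le_sum (f := fun i => ‖v i‖ ^ 2) (fun i _ => sq_nonneg _) (Finset.mem_univ j))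

lemma sum_inv_factorial_le (d : ℕ) :
    ∑ β ∈ multiIndices n d, (∏ j, ((β j).factorial : ℝ))⁻¹ ≤ Real.exp n := by
  have h1 : ∑ β ∈ multiIndices n d, (∏ j, ((β j).factorial : ℝ))⁻¹
      ≤ ∑ β ∈ Fintype.piFinset (fun _ : Fin n => Finset.range (d + 1)),
          (∏ j, ((β j).factorial : ℝ))⁻¹ := by
    refine Finset.sum_le_sum_of_subset_of_nonneg (Finset.filter_subset _ _) ?_
    intros; positivity
  refine h1.trans ?_
  have h2 : ∀ β : Fin n → ℕ, (∏ j, ((β j).factorial : ℝ))⁻¹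
      = ∏ j, (((β j).factorial : ℝ))⁻¹ := fun β => by
    rw [← Finset.prod_inv_distrib]
  simp_rw [h2]
  have h3 : ∏ _j : Fin n, ∑ b ∈ Finset.range (d + 1), ((b.factorial : ℝ))⁻¹
      = ∑ β ∈ Fintype.piFinset (fun _ : Fin n => Finset.range (d + 1)),
          ∏ j, (((β j).factorial : ℝ))⁻¹ :=
    Finset.prod_univ_sum _ _
  rw [← h3]
  have hsum : ∑ b ∈ Finset.range (d + 1), ((b.factorial : ℝ))⁻¹ ≤ Real.exp 1 := by
    have := Real.sum_le_exp_of_nonneg (zero_le_one) (d + 1)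
    simpa [one_div] using this
  calc ∏ _j : Fin n, ∑ b ∈ Finset.range (d + 1), ((b.factorial : ℝ))⁻¹
      ≤ ∏ _j : Fin n, Real.exp 1 := by
        refine Finset.prod_le_prod (fun _ _ => ?_) (fun _ _ => hsum)
        positivity
    _ = Real.exp 1 ^ n := by rw [Finset.prod_const, Finset.card_univ, Fintype.card_fin]
    _ = Real.exp n := by rw [← Real.exp_nat_mul, mul_one]

end ChainAux

open ChainAux

/-- chain estimate (Lemma 2.3): for polynomials `P₀,…,P_m` of degree ≤ k
with `P₀ = P`, `P_m = P'` and points `x₀ = x, x₁, …, x_m`,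
`|D^α(P−P')(x)| ≤ eⁿ · max_{|β| ≤ k−|α|} Σ_{i<m} |D^{α+β}(P_i−P_{i+1})(x_i)| ‖x−x_i‖^{|β|}`. -/
theorem chain_deriv_estimate {n k : ℕ} (m : ℕ)
    (P : ℕ → MvPolynomial (Fin n) ℝ) (x : ℕ → EuclideanSpace ℝ (Fin n))
    (hdeg : ∀ i ≤ m, (P i).totalDegree ≤ k)
    (α : Fin n → ℕ) (hα : (∑ i, α i) ≤ k) :
    |MvPolynomial.eval (fun i => x 0 i) (mderiv α (P 0 - P m))| ≤
      Real.exp n *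
        (multiIndices n (k - ∑ i, α i)).sup'
          (multiIndices_nonempty n (k - ∑ i, α i)) (fun β =>
            ∑ i ∈ Finset.range m,
              |MvPolynomial.eval (fun j => x i j) (mderiv (α + β) (P i - P (i + 1)))| *
                ‖x 0 - x i‖ ^ (∑ i, β i)) := by
  classical
  set D := k - ∑ i, α i with hD
  set F : (Fin n → ℕ) → ℝ := fun β =>
    ∑ i ∈ Finset.range m,
      |MvPolynomial.eval (fun j => x i j) (mderiv (α + β) (P i - P (i + 1)))| *
        ‖x 0 - x i‖ ^ (∑ i, β i) with hF
  set S := (multiIndices n D).sup' (multiIndices_nonempty n D) F with hS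
  have hFnonneg : ∀ β, 0 ≤ F β := fun β =>
    Finset.sum_nonneg fun i _ => mul_nonneg (abs_nonneg _) (pow_nonneg (norm_nonneg _) _)
  have h0mem : (fun _ : Fin n => 0) ∈ multiIndices n D := by simp [multiIndices]
  have hS0 : 0 ≤ S := le_trans (hFnonneg _) (Finset.le_sup' F h0mem)
  have htel : P 0 - P m = ∑ i ∈ Finset.range m, (P i - P (i + 1)) :=
    (Finset.sum_range_sub' P m).symm
  rw [htel, mderiv_sum, map_sum]
  refine le_trans (Finset.abs_sum_le_sum_abs _ _) ?_
  have hstep : ∀ i ∈ Finset.range m,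
      |MvPolynomial.eval (fun j => x 0 j) (mderiv α (P i - P (i + 1)))| ≤
        ∑ β ∈ multiIndices n D, (∏ j, ((β j).factorial : ℝ))⁻¹ *
          (|MvPolynomial.eval (fun j => x i j) (mderiv (α + β) (P i - P (i + 1)))| *
            ‖x 0 - x i‖ ^ (∑ j, β j)) := by
    intro i hi
    rw [Finset.mem_range] at hi
    have hQdeg : (P i - P (i + 1)).totalDegree ≤ k :=
      (totalDegree_sub _ _).trans (max_le (hdeg i hi.le) (hdeg (i + 1) hi))
    have hQ'deg : (mderiv α (P i - P (i + 1))).totalDegree ≤ D :=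
      totalDegree_mderiv_le α _ hQdeg
    rw [taylor_eval D _ hQ'deg (fun j => x i j) (fun j => x 0 j)]
    refine le_trans (Finset.abs_sum_le_sum_abs _ _) (Finset.sum_le_sum fun β hβ => ?_)
    rw [mderiv_mderiv]
    have hf : (0 : ℝ) < ∏ j, ((β j).factorial : ℝ) := by positivity
    have hp : |∏ j, ((fun j => x 0 j) j - (fun j => x i j) j) ^ β j|
        ≤ ‖x 0 - x i‖ ^ (∑ j, β j) := by
      rw [Finset.abs_prod, ← Finset.prod_pow_eq_pow_sum]
      refine Finset.prod_le_prod (fun _ _ => abs_nonneg _) (fun j _ => ?_)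
      rw [abs_pow]
      refine pow_le_pow_left₀ (abs_nonneg _) ?_ _
      have : x 0 j - x i j = (x 0 - x i) j := rfl
      rw [this]
      exact abs_coord_le _ j
    rw [abs_div, abs_of_pos hf, abs_mul, div_eq_mul_inv, mul_comm]
    refine mul_le_mul_of_nonneg_left ?_ (inv_nonneg.mpr hf.le)
    exact mul_le_mul_of_nonneg_left hp (abs_nonneg _)
  refine le_trans (Finset.sum_le_sum hstep) ?_
  rw [Finset.sum_comm]
  have hcollect : ∀ β ∈ multiIndices n D,
      (∑ i ∈ Finset.range m, (∏ j, ((β j).factorial : ℝ))⁻¹ *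
        (|MvPolynomial.eval (fun j => x i j) (mderiv (α + β) (P i - P (i + 1)))| *
          ‖x 0 - x i‖ ^ (∑ j, β j)))
      = (∏ j, ((β j).factorial : ℝ))⁻¹ * F β := fun β _ => by
    rw [hF, ← Finset.mul_sum]
  rw [Finset.sum_congr rfl hcollect]
  calc ∑ β ∈ multiIndices n D, (∏ j, ((β j).factorial : ℝ))⁻¹ * F β
      ≤ ∑ β ∈ multiIndices n D, (∏ j, ((β j).factorial : ℝ))⁻¹ * S :=
        Finset.sum_le_sum fun β hβ =>
          mul_le_mul_of_nonneg_left (Finset.le_sup' F hβ) (by positivity)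
    _ = (∑ β ∈ multiIndices n D, (∏ j, ((β j).factorial : ℝ))⁻¹) * S := by
        rw [Finset.sum_mul]
    _ ≤ Real.exp n * S :=
        mul_le_mul_of_nonneg_right (sum_inv_factorial_le D) hS0
end

section
/- For every finite metric space (M, ρ) there exists a tree T (in the graph-theoretic sense) whose vertex set is M such that the tree path metric ρ_T (the sum of ρ-distances along the unique path in T between two points) satisfies ρ(x,y) ≤ ρ_T(x,y) ≤ η·ρ(x,y) for all x,y ∈ M, with η depending only on |M|, and such that the maximum vertex degree of T is at least ⌈log₂(|M|)⌉. -/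
/-- The length of a walk in a graph on a metric space: the sum of the distances
between the endpoints of its consecutive edges. -/
noncomputable def walkSum {M : Type} [MetricSpace M] {G : SimpleGraph M} {x y : M}
    (p : G.Walk x y) : ℝ :=
  (p.darts.map fun d => dist d.toProd.1 d.toProd.2).sum

set_option linter.unusedSectionVars false
namespace TreeProp

open SimpleGraph

variable {M : Type} [MetricSpace M]

@[simp] lemma walkSum_nil {G : SimpleGraph M} {x : M} :
    walkSum (Walk.nil : G.Walk x x) = 0 := by simp [walkSum]

@[simp] lemma walkSum_cons {G : SimpleGraph M} {x y w : M} (h : G.Adj x y) (p : G.Walk y w) :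
    walkSum (Walk.cons h p) = dist x y + walkSum p := by simp [walkSum]

lemma walkSum_append {G : SimpleGraph M} {x y w : M} (p : G.Walk x y) (q : G.Walk y w) :
    walkSum (p.append q) = walkSum p + walkSum q := by
  simp [walkSum, Walk.darts_append]

lemma walkSum_reverse {G : SimpleGraph M} {x y : M} (p : G.Walk x y) :
    walkSum p.reverse = walkSum p := by
  induction p with
  | nil => simp
  | @cons a b c h q ih =>
      rw [Walk.reverse_cons, walkSum_append, ih, walkSum_cons, walkSum_cons,
        walkSum_nil, dist_comm b a]
      ring

lemma walkSum_nonneg {G : SimpleGraph M} {x y : M} (p : G.Walk x y) : 0 ≤ walkSum p := by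
  induction p with
  | nil => simp
  | cons h q ih => simp only [walkSum_cons]; positivity

lemma dist_le_walkSum {G : SimpleGraph M} {x y : M} (p : G.Walk x y) :
    dist x y ≤ walkSum p := by
  induction p with
  | nil => simp
  | @cons a b c h q ih =>
      simp only [walkSum_cons]
      calc dist a c ≤ dist a b + dist b c := dist_triangle _ _ _
        _ ≤ dist a b + walkSum q := by linarith

lemma walkSum_mapLe {G G' : SimpleGraph M} (hle : G ≤ G') {x y : M} (p : G.Walk x y) :
    walkSum (p.mapLe hle) = walkSum p := by
  induction p with
  | nil => simp [Walk.mapLe]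
  | cons h q ih => simp [Walk.mapLe] at ih ⊢; simp [walkSum, ih] at ih ⊢; exact ih

lemma support_mapLe {G G' : SimpleGraph M} (hle : G ≤ G') {x y : M} (p : G.Walk x y) :
    (p.mapLe hle).support = p.support := by
  induction p with
  | nil => simp [Walk.mapLe]
  | cons h q ih => simp only [Walk.mapLe, Walk.map_cons, Walk.support_cons] at ih ⊢; rw [ih]


/-- Add the edge `(u,z)` to a graph. -/
def addEdge (G : SimpleGraph M) (u z : M) : SimpleGraph M where
  Adj x y := x ≠ y ∧ (G.Adj x y ∨ (x = u ∧ y = z) ∨ (x = z ∧ y = u))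
  symm := by
    constructor
    rintro x y ⟨hne, h | ⟨rfl, rfl⟩ | ⟨rfl, rfl⟩⟩
    · exact ⟨hne.symm, Or.inl h.symm⟩
    · exact ⟨hne.symm, Or.inr (Or.inr ⟨rfl, rfl⟩)⟩
    · exact ⟨hne.symm, Or.inr (Or.inl ⟨rfl, rfl⟩)⟩
  loopless := ⟨fun x => by rintro ⟨hne, -⟩; exact hne rfl⟩

lemma le_addEdge {G : SimpleGraph M} {u z : M} : G ≤ addEdge G u z :=
  fun _ _ h => ⟨h.ne, Or.inl h⟩

/-- A graph whose edges lie within `s`, together with the unique-path property on `s`. -/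
def EdgesIn (G : SimpleGraph M) (s : Set M) : Prop := ∀ ⦃x y⦄, G.Adj x y → x ∈ s ∧ y ∈ s

def TreeOn (G : SimpleGraph M) (s : Set M) : Prop :=
  EdgesIn G s ∧ ∀ x ∈ s, ∀ y ∈ s, ∃! p : G.Walk x y, p.IsPath

def StretchOn (G : SimpleGraph M) (s : Set M) (η : ℝ) : Prop :=
  ∀ x ∈ s, ∀ y ∈ s, ∀ p : G.Walk x y, p.IsPath → walkSum p ≤ η * dist x y

lemma support_subset_of_edgesIn {G : SimpleGraph M} {s : Set M} (hE : EdgesIn G s)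
    {x y : M} (q : G.Walk x y) (hx : x ∈ s) : ∀ v ∈ q.support, v ∈ s := by
  induction q with
  | nil => intro v hv; simp at hv; exact hv ▸ hx
  | @cons a b c h q ih =>
      intro v hv
      rw [Walk.support_cons, List.mem_cons] at hv
      rcases hv with rfl | hv
      · exact hx
      · exact ih (hE h).2 v hv

lemma isPath_loop_eq_nil {G : SimpleGraph M} {a : M} (p : G.Walk a a) (hp : p.IsPath) :
    p = Walk.nil := by
  cases p with
  | nil => rfl
  | cons h q =>
      rw [Walk.cons_isPath_iff] at hp
      exact absurd (Walk.end_mem_support q) hp.2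

section Pendant

variable {G : SimpleGraph M} {s : Set M} {u z : M}

lemma adj_addEdge_uz (hu : u ∈ s) (hz : z ∉ s) : (addEdge G u z).Adj u z :=
  ⟨fun h => hz (h ▸ hu), Or.inr (Or.inl ⟨rfl, rfl⟩)⟩

lemma adj_addEdge_zu (hu : u ∈ s) (hz : z ∉ s) : (addEdge G u z).Adj z u :=
  (adj_addEdge_uz hu hz).symm

/-- The first step of a path starting at the pendant vertex `z` goes to `u`. -/
lemma firstStep (hE : EdgesIn G s) (hu : u ∈ s) (hz : z ∉ s) {y : M}
    (p : (addEdge G u z).Walk z y) (hp : p.IsPath) (hy : y ≠ z) :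
    ∃ q : (addEdge G u z).Walk u y,
      p = Walk.cons (adj_addEdge_zu hu hz) q ∧ z ∉ q.support := by
  cases p with
  | nil => exact absurd rfl hy
  | @cons _ b _ h q =>
      rw [Walk.cons_isPath_iff] at hp
      obtain ⟨hne, hG | ⟨hzu, -⟩ | ⟨-, rfl⟩⟩ := h
      · exact absurd (hE hG).1 hz
      · exact absurd (hzu ▸ hu) hz
      · exact ⟨q, rfl, hp.2⟩

/-- A walk in `addEdge G u z` avoiding `z` comes from a walk in `G`. -/
lemma down (hE : EdgesIn G s) {x y : M}
    (p : (addEdge G u z).Walk x y) (hzp : z ∉ p.support) :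
    ∃ q : G.Walk x y, p = q.mapLe le_addEdge := by
  induction p with
  | nil => exact ⟨Walk.nil, rfl⟩
  | @cons a b c h p' ih =>
      rw [Walk.support_cons, List.mem_cons] at hzp
      push_neg at hzp
      obtain ⟨hza, hzp'⟩ := hzp
      obtain ⟨hne, hG | ⟨-, rfl⟩ | ⟨hza', -⟩⟩ := h
      · obtain ⟨q', hq'⟩ := ih hzp'
        exact ⟨Walk.cons hG q', by rw [hq']; rfl⟩
      · exact absurd (Walk.start_mem_support p') hzp'
      · exact absurd hza'.symm hza
  
/-- `z` is not an internal vertex of any path between vertices other than `z`. -/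
lemma z_not_internal (hE : EdgesIn G s) (hu : u ∈ s) (hz : z ∉ s) {x y : M}
    (p : (addEdge G u z).Walk x y) (hp : p.IsPath) (hx : x ≠ z) (hy : y ≠ z) :
    z ∉ p.support := by
  classical
  by_contra hzin
  set t := p.takeUntil z hzin with ht
  set r := p.dropUntil z hzin with hr
  have hspec : t.append r = p := p.take_spec hzin
  have htp : t.IsPath := hp.takeUntil hzin
  have hrp : r.IsPath := hp.dropUntil hzin
  obtain ⟨r₁, hr₁, -⟩ := firstStep hE hu hz r hrp hy
  obtain ⟨t₁, ht₁, -⟩ := firstStep hE hu hz t.reverse htp.reverse hx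
  have hut : u ∈ t.support := by
    have : u ∈ t.reverse.support := by
      rw [ht₁, Walk.support_cons]
      exact List.mem_cons_of_mem _ (Walk.start_mem_support t₁)
    rwa [Walk.support_reverse, List.mem_reverse] at this
  have hur : u ∈ r.support.tail := by
    rw [hr₁, Walk.support_cons]
    exact Walk.start_mem_support r₁
  have hnd : (t.support ++ r.support.tail).Nodup := by
    rw [← Walk.support_append, hspec]; exact hp.support_nodup
  rw [List.nodup_append] at hnd
  exact hnd.2.2 u hut u hur rfl

end Pendant


section Leaf

variable {G : SimpleGraph M} {s : Set M} {u z : M} {η : ℝ}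

lemma leaf (hT : TreeOn G s) (hS : StretchOn G s η) (hη : 0 ≤ η) (hu : u ∈ s) (hz : z ∉ s)
    (h3 : ∀ x ∈ s, dist u z ≤ 3 * dist x z) :
    TreeOn (addEdge G u z) (insert z s) ∧
      StretchOn (addEdge G u z) (insert z s) (4 * η + 3) := by
  obtain ⟨hE, hUniq⟩ := hT
  have hE' : EdgesIn (addEdge G u z) (insert z s) := by
    rintro x y ⟨hne, hG | ⟨rfl, rfl⟩ | ⟨rfl, rfl⟩⟩
    · exact ⟨Set.mem_insert_of_mem _ (hE hG).1, Set.mem_insert_of_mem _ (hE hG).2⟩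
    · exact ⟨Set.mem_insert_of_mem _ hu, Set.mem_insert _ _⟩
    · exact ⟨Set.mem_insert _ _, Set.mem_insert_of_mem _ hu⟩
  -- every path between points of `s` comes from `G`
  have key_ss : ∀ x ∈ s, ∀ y ∈ s, ∀ p : (addEdge G u z).Walk x y, p.IsPath →
      ∃ q : G.Walk x y, p = q.mapLe le_addEdge ∧ q.IsPath := by
    intro x hx y hy p hp
    have hzp : z ∉ p.support :=
      z_not_internal hE hu hz p hp (fun h => hz (h ▸ hx)) (fun h => hz (h ▸ hy))
    obtain ⟨q, hq⟩ := down hE p hzp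
    refine ⟨q, hq, ?_⟩
    rw [hq] at hp
    exact (Walk.mapLe_isPath le_addEdge).mp hp
  -- every path from `z` to a point of `s` steps to `u` and continues in `G`
  have key_zy : ∀ y ∈ s, ∀ p : (addEdge G u z).Walk z y, p.IsPath →
      ∃ q : G.Walk u y,
        p = Walk.cons (adj_addEdge_zu hu hz) (q.mapLe le_addEdge) ∧ q.IsPath := by
    intro y hy p hp
    obtain ⟨q', hq', hzq'⟩ := firstStep hE hu hz p hp (fun h => hz (h ▸ hy))
    obtain ⟨q, hq⟩ := down hE q' hzq'
    have hq'p : q'.IsPath := by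
      rw [hq'] at hp
      exact ((Walk.cons_isPath_iff _ _).mp hp).1
    refine ⟨q, by rw [hq', hq], ?_⟩
    rw [hq] at hq'p
    exact (Walk.mapLe_isPath le_addEdge).mp hq'p
  constructor
  · refine ⟨hE', ?_⟩
    have case_zz : ∃! p : (addEdge G u z).Walk z z, p.IsPath :=
      ⟨Walk.nil, Walk.IsPath.nil, fun p hp => isPath_loop_eq_nil p hp⟩
    have case_zy : ∀ y ∈ s, ∃! p : (addEdge G u z).Walk z y, p.IsPath := by
      intro y hy
      obtain ⟨q₀, hq₀, huniq⟩ := hUniq u hu y hy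
      refine ⟨Walk.cons (adj_addEdge_zu hu hz) (q₀.mapLe le_addEdge), ?_, ?_⟩
      · refine (Walk.cons_isPath_iff _ _).mpr ⟨(Walk.mapLe_isPath le_addEdge).mpr hq₀, ?_⟩
        rw [support_mapLe]
        exact fun hmem => hz (support_subset_of_edgesIn hE q₀ hu _ hmem)
      · intro p hp
        obtain ⟨q, hpq, hqp⟩ := key_zy y hy p hp
        rw [hpq, huniq q hqp]
    have case_xz : ∀ x ∈ s, ∃! p : (addEdge G u z).Walk x z, p.IsPath := by
      intro x hx
      obtain ⟨q₀, hq₀, huniq⟩ := hUniq u hu x hx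
      refine ⟨(Walk.cons (adj_addEdge_zu hu hz) (q₀.mapLe le_addEdge)).reverse, ?_, ?_⟩
      · refine Walk.IsPath.reverse ?_
        refine (Walk.cons_isPath_iff _ _).mpr ⟨(Walk.mapLe_isPath le_addEdge).mpr hq₀, ?_⟩
        rw [support_mapLe]
        exact fun hmem => hz (support_subset_of_edgesIn hE q₀ hu _ hmem)
      · intro p hp
        obtain ⟨q, hpq, hqp⟩ := key_zy x hx p.reverse hp.reverse
        rw [← Walk.reverse_reverse p, hpq, huniq q hqp]
    have case_xy : ∀ x ∈ s, ∀ y ∈ s, ∃! p : (addEdge G u z).Walk x y, p.IsPath := by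
      intro x hx y hy
      obtain ⟨q₀, hq₀, huniq⟩ := hUniq x hx y hy
      refine ⟨q₀.mapLe le_addEdge, (Walk.mapLe_isPath le_addEdge).mpr hq₀, ?_⟩
      intro p hp
      obtain ⟨q, hpq, hqp⟩ := key_ss x hx y hy p hp
      rw [hpq, huniq q hqp]
    intro x hx y hy
    rcases Set.mem_insert_iff.mp hx with hxz | hxs
    · subst hxz
      rcases Set.mem_insert_iff.mp hy with hyz | hys
      · subst hyz; exact case_zz
      · exact case_zy y hys
    · rcases Set.mem_insert_iff.mp hy with hyz | hys
      · subst hyz; exact case_xz x hxs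
      · exact case_xy x hxs y hys
  · -- stretch
    have stretch_zy : ∀ y ∈ s, ∀ p : (addEdge G u z).Walk z y, p.IsPath →
        walkSum p ≤ (4 * η + 3) * dist z y := by
      intro y hy p hp
      obtain ⟨q, hpq, hqp⟩ := key_zy y hy p hp
      have h1 : walkSum p = dist z u + walkSum q := by
        rw [hpq, walkSum_cons, walkSum_mapLe]
      have h2 : walkSum q ≤ η * dist u y := hS u hu y hy q hqp
      have h3' : dist u z ≤ 3 * dist y z := h3 y hy
      have h4 : dist u y ≤ dist u z + dist z y := dist_triangle _ _ _
      have h5 : dist z u = dist u z := dist_comm _ _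
      have h6 : dist y z = dist z y := dist_comm _ _
      have h7 : (0:ℝ) ≤ dist z y := dist_nonneg
      nlinarith [mul_le_mul_of_nonneg_left h4 hη]
    have case_xz : ∀ x ∈ s, ∀ p : (addEdge G u z).Walk x z, p.IsPath →
        walkSum p ≤ (4 * η + 3) * dist x z := by
      intro x hx p hp
      rw [← walkSum_reverse, _root_.dist_comm]
      exact stretch_zy x hx p.reverse hp.reverse
    have case_xy : ∀ x ∈ s, ∀ y ∈ s, ∀ p : (addEdge G u z).Walk x y, p.IsPath →
        walkSum p ≤ (4 * η + 3) * dist x y := by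
      intro x hx y hy p hp
      obtain ⟨q, hpq, hqp⟩ := key_ss x hx y hy p hp
      have h1 : walkSum p = walkSum q := by rw [hpq, walkSum_mapLe]
      have h2 : walkSum q ≤ η * dist x y := hS x hx y hy q hqp
      have h7 : (0:ℝ) ≤ dist x y := dist_nonneg
      nlinarith
    have case_zz : ∀ p : (addEdge G u z).Walk z z, p.IsPath →
        walkSum p ≤ (4 * η + 3) * dist z z := by
      intro p hp
      rw [isPath_loop_eq_nil p hp, walkSum_nil, _root_.dist_self, mul_zero]
    intro x hx y hy p hp
    rcases Set.mem_insert_iff.mp hx with hxz | hxs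
    · subst hxz
      rcases Set.mem_insert_iff.mp hy with hyz | hys
      · subst hyz; exact case_zz p hp
      · exact stretch_zy y hys p hp
    · rcases Set.mem_insert_iff.mp hy with hyz | hys
      · subst hyz; exact case_xz x hxs p hp
      · exact case_xy x hxs y hys p hp

end Leaf


section Build

variable [Fintype M]

lemma one_le_four_pow (m : ℕ) : (1:ℝ) ≤ 4 ^ m := one_le_pow₀ (by norm_num)

/-- Extend a tree on `s` to a tree on `t ⊇ s` by repeatedly attaching nearest points. -/
lemma extend (k : ℕ) : ∀ (t s : Set M) (G : SimpleGraph M), s ⊆ t → (t \ s).ncard = k →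
    s.Nonempty → TreeOn G s → StretchOn G s ((4:ℝ) ^ s.ncard - 1) →
    ∃ G', G ≤ G' ∧ TreeOn G' t ∧ StretchOn G' t ((4:ℝ) ^ t.ncard - 1) := by
  induction k with
  | zero =>
      intro t s G hst hk hne hT hS
      have hts : t ⊆ s := Set.diff_eq_empty.mp ((Set.ncard_eq_zero (t \ s).toFinite).mp hk)
      have : s = t := Set.Subset.antisymm hst hts
      subst this
      exact ⟨G, le_refl _, hT, hS⟩
  | succ k ihk =>
      intro t s G hst hk hne hT hS
      have hne' : (t \ s).Nonempty := Set.nonempty_of_ncard_ne_zero (by omega)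
      obtain ⟨z, hzt, hzs⟩ := hne'
      obtain ⟨u, hus, humin⟩ := Set.exists_min_image s (fun x => dist x z) s.toFinite hne
      have h3 : ∀ x ∈ s, dist u z ≤ 3 * dist x z := by
        intro x hx
        have h1 : dist u z ≤ dist x z := humin x hx
        have h2 : (0:ℝ) ≤ dist x z := dist_nonneg
        linarith
      have hη : (0:ℝ) ≤ (4:ℝ) ^ s.ncard - 1 := by
        have := one_le_four_pow s.ncard; linarith
      obtain ⟨hT', hS'⟩ := leaf hT hS hη hus hzs h3
      have hcard : (insert z s).ncard = s.ncard + 1 := Set.ncard_insert_of_notMem hzs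
      have hSconv : StretchOn (addEdge G u z) (insert z s) ((4:ℝ) ^ (insert z s).ncard - 1) := by
        have heq : (4:ℝ) * ((4:ℝ) ^ s.ncard - 1) + 3 = (4:ℝ) ^ (s.ncard + 1) - 1 := by ring
        rw [hcard, ← heq]
        exact hS'
      have hdiff : t \ insert z s = (t \ s) \ {z} := by
        ext x; simp only [Set.mem_diff, Set.mem_insert_iff, Set.mem_singleton_iff]; tauto
      have hzts : z ∈ t \ s := ⟨hzt, hzs⟩
      have hk' : (t \ insert z s).ncard = k := by
        rw [hdiff, Set.ncard_diff_singleton_of_mem hzts, hk]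
        omega
      obtain ⟨G', hle, hT'', hS''⟩ := ihk t (insert z s) (addEdge G u z)
        (Set.insert_subset hzt hst) hk' (Set.insert_nonempty _ _) hT' hSconv
      exact ⟨G', le_trans le_addEdge hle, hT'', hS''⟩

/-- One step of the main induction: split along a diameter pair. -/
lemma bstep (n : ℕ)
    (ih : ∀ m, m < n → ∀ s : Set M, s.ncard = m → s.Nonempty →
      ∃ (G : SimpleGraph M) (v : M), TreeOn G s ∧ StretchOn G s ((4:ℝ) ^ m - 1) ∧ v ∈ s ∧
        Nat.clog 2 m ≤ (G.neighborSet v).ncard)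
    (s : Set M) (hcard : s.ncard = n) (a b : M) (ha : a ∈ s) (hb : b ∈ s)
    (hmax : ∀ x ∈ s, ∀ y ∈ s, dist x y ≤ dist a b) (hΔ : 0 < dist a b)
    (hhalf : n ≤ 2 * {x | x ∈ s ∧ dist x a ≤ dist x b}.ncard) :
    ∃ (G : SimpleGraph M) (v : M), TreeOn G s ∧ StretchOn G s ((4:ℝ) ^ n - 1) ∧ v ∈ s ∧
      Nat.clog 2 n ≤ (G.neighborSet v).ncard := by
  set N := {x | x ∈ s ∧ dist x a ≤ dist x b} with hN
  have hNs : N ⊆ s := fun x hx => hx.1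
  have haN : a ∈ N := ⟨ha, by rw [_root_.dist_self]; exact dist_nonneg⟩
  have hbN : b ∉ N := by
    rintro ⟨-, h2⟩
    rw [_root_.dist_self] at h2
    rw [_root_.dist_comm] at h2
    linarith
  have hmn : N.ncard < n := by
    rw [← hcard]
    exact Set.ncard_lt_ncard ⟨hNs, fun hsub => hbN (hsub hb)⟩ s.toFinite
  obtain ⟨G₀, v, hT₀, hS₀, hvN, hdeg⟩ := ih N.ncard hmn N rfl ⟨a, haN⟩
  have h3 : ∀ x ∈ N, dist v b ≤ 3 * dist x b := by
    intro x hxN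
    have h1 : dist v b ≤ dist a b := hmax v (hNs hvN) b hb
    have h2 : dist a b ≤ dist a x + dist x b := dist_triangle a x b
    have h4 : dist a x = dist x a := _root_.dist_comm a x
    have h5 := hxN.2
    have h6 : (0:ℝ) ≤ dist x b := dist_nonneg
    linarith
  have hη : (0:ℝ) ≤ (4:ℝ) ^ N.ncard - 1 := by
    have := one_le_four_pow N.ncard; linarith
  obtain ⟨hT₁, hS₁⟩ := leaf hT₀ hS₀ hη hvN hbN h3
  have hcard₁ : (insert b N).ncard = N.ncard + 1 := Set.ncard_insert_of_notMem hbN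
  have hSconv : StretchOn (addEdge G₀ v b) (insert b N) ((4:ℝ) ^ (insert b N).ncard - 1) := by
    have heq : (4:ℝ) * ((4:ℝ) ^ N.ncard - 1) + 3 = (4:ℝ) ^ (N.ncard + 1) - 1 := by ring
    rw [hcard₁, ← heq]
    exact hS₁
  obtain ⟨G', hle, hT', hS'⟩ := extend (s \ insert b N).ncard s (insert b N) (addEdge G₀ v b)
    (Set.insert_subset hb hNs) rfl (Set.insert_nonempty _ _) hT₁ hSconv
  refine ⟨G', v, hT', by rwa [hcard] at hS', hNs hvN, ?_⟩
  -- degree bound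
  have hbnb : b ∉ G₀.neighborSet v := fun hadj => hbN (hT₀.1 hadj).2
  have hsubnb : insert b (G₀.neighborSet v) ⊆ G'.neighborSet v := by
    intro w hw
    rcases Set.mem_insert_iff.mp hw with rfl | hw
    · exact hle (adj_addEdge_uz hvN hbN)
    · exact hle (le_addEdge hw)
  have hcount : Nat.clog 2 N.ncard + 1 ≤ (G'.neighborSet v).ncard := by
    calc Nat.clog 2 N.ncard + 1 ≤ (G₀.neighborSet v).ncard + 1 := by omega
      _ = (insert b (G₀.neighborSet v)).ncard := (Set.ncard_insert_of_notMem hbnb).symm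
      _ ≤ (G'.neighborSet v).ncard := Set.ncard_le_ncard hsubnb (Set.toFinite _)
  have hclog : Nat.clog 2 n ≤ Nat.clog 2 N.ncard + 1 := by
    refine (Nat.clog_le_iff_le_pow (by norm_num)).mpr ?_
    calc n ≤ 2 * N.ncard := hhalf
      _ ≤ 2 * 2 ^ Nat.clog 2 N.ncard := by
          have := Nat.le_pow_clog (b := 2) (by norm_num) N.ncard; omega
      _ = 2 ^ (Nat.clog 2 N.ncard + 1) := by rw [pow_succ]; ring
  omega

end Build

section Main

variable [Fintype M]

lemma buildTree (n : ℕ) : ∀ s : Set M, s.ncard = n → s.Nonempty →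
    ∃ (G : SimpleGraph M) (v : M), TreeOn G s ∧ StretchOn G s ((4:ℝ) ^ n - 1) ∧ v ∈ s ∧
      Nat.clog 2 n ≤ (G.neighborSet v).ncard := by
  induction n using Nat.strong_induction_on with
  | _ n ih =>
    intro s hcard hne
    rcases Nat.lt_or_ge n 2 with hn2 | hn2
    · -- n = 0 or 1
      rcases Nat.lt_or_ge n 1 with hn1 | hn1
      · exfalso
        have h0 : n = 0 := by omega
        rw [h0] at hcard
        exact hne.ne_empty ((Set.ncard_eq_zero s.toFinite).mp hcard)
      · have h1 : n = 1 := by omega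
        subst h1
        obtain ⟨v, rfl⟩ := Set.ncard_eq_one.mp hcard
        refine ⟨⊥, v, ⟨fun x y h => h.elim, ?_⟩, ?_, rfl, ?_⟩
        · intro x hx y hy
          rw [Set.mem_singleton_iff] at hx hy
          subst hx; subst hy
          exact ⟨Walk.nil, Walk.IsPath.nil, fun p hp => isPath_loop_eq_nil p hp⟩
        · intro x hx y hy p hp
          rw [Set.mem_singleton_iff] at hx hy
          subst hx; subst hy
          rw [isPath_loop_eq_nil p hp, walkSum_nil, _root_.dist_self, mul_zero]
        · simp [Nat.clog_one_right]
    · -- n ≥ 2 : diameter pair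
      obtain ⟨x₀, hx₀⟩ := hne
      obtain ⟨q, hq, hmax'⟩ := Set.exists_max_image (s ×ˢ s) (fun q => dist q.1 q.2)
        (s.toFinite.prod s.toFinite) ⟨(x₀, x₀), Set.mk_mem_prod hx₀ hx₀⟩
      obtain ⟨a, b⟩ := q
      have ha : a ∈ s := hq.1
      have hb : b ∈ s := hq.2
      have hmax : ∀ x ∈ s, ∀ y ∈ s, dist x y ≤ dist a b := fun x hx y hy =>
        hmax' (x, y) (Set.mk_mem_prod hx hy)
      have hΔ : 0 < dist a b := by
        have h2 : 1 < s.ncard := by omega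
        obtain ⟨x, y, hx, hy, hxy⟩ := (Set.one_lt_ncard_iff s.toFinite).mp h2
        have := hmax x hx y hy
        have := dist_pos.mpr hxy
        linarith
      set A := {x | x ∈ s ∧ dist x a ≤ dist x b} with hA
      set B := {x | x ∈ s ∧ dist x b ≤ dist x a} with hB
      have hABs : s ⊆ A ∪ B := by
        intro x hx
        rcases le_total (dist x a) (dist x b) with h | h
        · exact Or.inl ⟨hx, h⟩
        · exact Or.inr ⟨hx, h⟩
      have hsum : n ≤ A.ncard + B.ncard := by
        calc n = s.ncard := hcard.symm
          _ ≤ (A ∪ B).ncard := Set.ncard_le_ncard hABs (Set.toFinite _)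
          _ ≤ A.ncard + B.ncard := Set.ncard_union_le _ _
      rcases le_total B.ncard A.ncard with hcmp | hcmp
      · exact bstep n ih s hcard a b ha hb hmax hΔ (by show n ≤ 2 * A.ncard; omega)
      · refine bstep n ih s hcard b a hb ha ?_ ?_ ?_
        · intro x hx y hy
          rw [_root_.dist_comm b a]
          exact hmax x hx y hy
        · rwa [_root_.dist_comm b a]
        · show n ≤ 2 * B.ncard
          omega

end Main

end TreeProp


/-- Proposition 3.1: there is `η` depending only on the cardinality
such that every finite metric space `M` admits a tree `T` on vertex set `M` whose
path metric `ρ_T` satisfies `ρ ≤ ρ_T ≤ η·ρ`, and whose maximal vertex degree is at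
least `⌈log₂ |M|⌉`. -/
theorem exists_tree_with_large_degree :
    ∃ η : ℕ → ℝ,
      ∀ (M : Type) [MetricSpace M] [Fintype M] [Nonempty M],
        ∃ G : SimpleGraph M, G.IsTree ∧
          (∀ x y : M, ∀ p : G.Walk x y, p.IsPath →
            dist x y ≤ walkSum p ∧ walkSum p ≤ η (Fintype.card M) * dist x y) ∧
          ∃ x : M, Nat.clog 2 (Fintype.card M) ≤ (G.neighborSet x).ncard := by
  refine ⟨fun n => (4:ℝ) ^ n - 1, ?_⟩
  intro M _ _ _
  have hcard : (Set.univ : Set M).ncard = Fintype.card M := by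
    rw [Set.ncard_univ, Nat.card_eq_fintype_card]
  obtain ⟨G, v, hT, hS, -, hdeg⟩ :=
    TreeProp.buildTree (Fintype.card M) Set.univ hcard Set.univ_nonempty
  refine ⟨G, ?_, ?_, ⟨v, hdeg⟩⟩
  · rw [SimpleGraph.isTree_iff_existsUnique_path]
    exact ⟨‹Nonempty M›, fun x y => hT.2 x trivial y trivial⟩
  · intro x y p hp
    exact ⟨TreeProp.dist_le_walkSum p, hS x trivial y trivial p hp⟩
end
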